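/- For every n ∈ ℕ and every x ∈ ℝ, Σ_{j=1−n}^{n} Γ_j(x)^2 < 6. -/

import Mathlib

open Real Set MeasureTheory

noncomputable def trigPi (s : ℕ) (y : ℤ → ℝ) (x : ℝ) : ℝ :=
  ∏ i ∈ Finset.range (2 * s), Real.sin ((x - y ((i : ℤ) + 1)) / 2)

noncomputable def xnode (n : ℕ) (j : ℤ) : ℝ := -(j : ℝ) * (Real.pi / n)

noncomputable def jIdx (y : ℤ → ℝ) (n : ℕ) (i : ℤ) : ℤ := ⌈-(y i) * n / Real.pi⌉

noncomputable def Oint (y : ℤ → ℝ) (n m : ℕ) (i : ℤ) : Set ℝ :=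
  Set.Ioo (xnode n (jIdx y n i + m + 1)) (xnode n (jIdx y n i - m))

noncomputable def Oall (y : ℤ → ℝ) (n m : ℕ) : Set ℝ := ⋃ i : ℤ, Oint y n m i

def memH (y : ℤ → ℝ) (n m : ℕ) (j : ℤ) : Prop := xnode n j ∉ Oall y n m

noncomputable def Gam (n : ℕ) (j : ℤ) (x : ℝ) : ℝ :=
  min 1 (1 / (n * |Real.sin ((x - (xnode n j + Real.pi / n / 2)) / 2)|))

noncomputable def Jker (n b : ℕ) (j : ℤ) (x : ℝ) : ℝ :=
  (Real.sin (n * (x - xnode n j) / 2) / Real.sin ((x - xnode n j) / 2)) ^ (2 * b) +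
    (Real.sin (n * (x - xnode n (j - 1)) / 2) / Real.sin ((x - xnode n (j - 1)) / 2)) ^ (2 * b)

noncomputable def tfun (s : ℕ) (y : ℤ → ℝ) (n b : ℕ) (j : ℤ) (x : ℝ) : ℝ :=
  (∫ u in (xnode n j - Real.pi)..x, Jker n b j u * trigPi s y u) /
    (∫ u in (xnode n j - Real.pi)..(xnode n j + Real.pi), Jker n b j u * trigPi s y u)

noncomputable def chiFun (n : ℕ) (j : ℤ) (x : ℝ) : ℝ := if x ≤ xnode n j then 0 else 1

def IsTrigPoly (m : ℕ) (P : ℝ → ℝ) : Prop :=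
  ∃ a b : ℕ → ℝ, ∀ x : ℝ,
    P x = a 0 + ∑ k ∈ Finset.Icc 1 m, (a k * Real.cos (k * x) + b k * Real.sin (k * x))

noncomputable def omegaMod (k : ℕ) (f : ℝ → ℝ) (t : ℝ) : ℝ :=
  sSup {v : ℝ | ∃ δ x : ℝ, 0 < δ ∧ δ ≤ t ∧
    v = |∑ i ∈ Finset.range (k + 1), (-1 : ℝ) ^ (k - i) * (k.choose i : ℝ) * f (x + i * δ)|}

noncomputable def taufun (s : ℕ) (y : ℤ → ℝ) (n b : ℕ) (j : ℤ) (α : ℝ) (x : ℝ) : ℝ :=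
  α * (∫ u in (xnode n j - Real.pi)..x, tfun s y n b (j + 10) u) +
    (1 - α) * (∫ u in (xnode n j - Real.pi)..x, tfun s y n b (j - 10) u)

noncomputable def PsiCap (a ht hh x : ℝ) : ℝ :=
  max (x - a) 0 ^ 3 + 3 * ht * max (x - a) 0 ^ 2 + hh * max (x - a) 0

noncomputable def qPoly (dj h x : ℝ) : ℝ :=
  x ^ 4 / (8 * Real.pi) + ((Real.pi - dj) / (2 * Real.pi)) * x ^ 3 +
    ((5 * dj ^ 2 - 6 * dj * Real.pi - h ^ 2) / (4 * Real.pi)) * x ^ 2 +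
    ((Real.pi - dj) * (5 * dj ^ 2 - 2 * Real.pi ^ 2 - h ^ 2) / (2 * Real.pi)) * x


/-!
Writing `T = x n / π - 1 / 2`, the angle in `Γ_j(x)` is `π (T + j) / (2n)`, so `Γ_j(x)^2` is
`2n`-periodic in `j` and the sum may be taken over `j = k - ⌊T⌋`, `0 ≤ k < 2n`, where the angle
is `π t / (2n)` with `t = k + fract T`. Jordan's inequality gives
`n sin (π t / (2n)) ≥ min t (2n - t)`, hence
`Γ_j(x)^2 ≤ 1 / max(1, k)^2 + 1 / max(1, 2n - 1 - k)^2`, and summing over `k` gives at most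
`2 (1 + ζ(2)) = 2 + π^2 / 3 < 6`.
-/

open Finset Function

theorem Function.Periodic.sum_range_add {M : Type*} [AddCommMonoid M] {f : ℤ → M} {N : ℕ}
    (hf : Periodic f N) (a : ℤ) : ∑ k ∈ range N, f (a + k) = ∑ k ∈ range N, f k := by
  have hshift : Periodic (fun a : ℤ => ∑ k ∈ range N, f (a + k)) 1 := by
    intro a
    cases N with
    | zero => simp
    | succ M =>
      simp only [sum_range_succ (fun k : ℕ => f (a + 1 + k)),
        sum_range_succ' (fun k : ℕ => f (a + k))]
      rw [show a + 1 + M = a + ((M + 1 : ℕ) : ℤ) by push_cast; ring, hf a]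
      push_cast
      simp only [add_zero, add_assoc, add_comm (1 : ℤ)]
  simpa using hshift.int_mul_eq a

noncomputable def clampedInvSq (t : ℝ) : ℝ := (max 1 t)⁻¹ ^ 2

theorem clampedInvSq_nonneg (t : ℝ) : 0 ≤ clampedInvSq t := by
  unfold clampedInvSq; positivity

theorem clampedInvSq_antitone : Antitone clampedInvSq := fun s t hst => by
  unfold clampedInvSq
  gcongr

theorem clampedInvSq_min_le (s t : ℝ) :
    clampedInvSq (min s t) ≤ clampedInvSq s + clampedInvSq t := by
  rcases min_choice s t with h | h <;> rw [h]
  · exact le_add_of_nonneg_right (clampedInvSq_nonneg t)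
  · exact le_add_of_nonneg_left (clampedInvSq_nonneg s)

theorem min_one_one_div_sq_le_clampedInvSq {d s : ℝ} (hs : 0 ≤ s) (hds : d ≤ s) :
    min 1 (1 / s) ^ 2 ≤ clampedInvSq d := by
  have hle : min 1 (1 / s) ≤ (max 1 d)⁻¹ := by
    rcases le_total d 1 with h | h
    · rw [max_eq_left h, inv_one]
      exact min_le_left _ _
    · rw [max_eq_right h, one_div]
      exact (min_le_right _ _).trans (inv_anti₀ (by linarith) hds)
  exact pow_le_pow_left₀ (le_min zero_le_one (by positivity)) hle 2

-- `1 / 0 ^ 2 = 0` in Lean, so the `k = 0` term of the zeta series is absent.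
theorem sum_range_clampedInvSq_lt_three (N : ℕ) : ∑ k ∈ range N, clampedInvSq k < 3 := by
  cases N with
  | zero => simp
  | succ N =>
    have hzeta : ∑ k ∈ range (N + 1), 1 / (k : ℝ) ^ 2 ≤ π ^ 2 / 6 :=
      sum_le_hasSum _ (fun _ _ => by positivity) hasSum_zeta_two
    have hterm (k : ℕ) : clampedInvSq ((k + 1 : ℕ) : ℝ) = 1 / ((k + 1 : ℕ) : ℝ) ^ 2 := by
      rw [clampedInvSq, max_eq_right (by simp), one_div, inv_pow]
    have hzero : clampedInvSq ((0 : ℕ) : ℝ) = 1 := by simp [clampedInvSq]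
    rw [sum_range_succ'] at hzeta ⊢
    simp only [hterm, hzero]
    rw [Nat.cast_zero, zero_pow two_ne_zero, div_zero, add_zero] at hzeta
    nlinarith [pi_lt_d2, pi_pos]

theorem min_sub_le_mul_sin {c t : ℝ} (hc : 0 < c) (ht₀ : 0 ≤ t) (ht : t ≤ 2 * c) :
    min t (2 * c - t) ≤ c * sin (π / (2 * c) * t) := by
  have hπ := pi_pos
  rcases le_total t c with h | h
  · have hjordan := mul_le_sin (x := π / (2 * c) * t) (by positivity) (by
      rw [div_mul_eq_mul_div, div_le_div_iff₀ (by positivity) two_pos]; nlinarith)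
    rw [show 2 / π * (π / (2 * c) * t) = t / c by field_simp, div_le_iff₀ hc] at hjordan
    linarith [min_le_left t (2 * c - t)]
  · have hjordan := mul_le_sin (x := π - π / (2 * c) * t) (by
      rw [sub_nonneg, div_mul_eq_mul_div, div_le_iff₀ (by positivity)]; nlinarith) (by
      rw [sub_le_comm, div_mul_eq_mul_div, le_div_iff₀ (by positivity)]; nlinarith)
    rw [sin_pi_sub, show 2 / π * (π - π / (2 * c) * t) = (2 * c - t) / c by field_simp,
      div_le_iff₀ hc] at hjordan
    linarith [min_le_right t (2 * c - t)]

theorem Gam_eq {n : ℕ} (hn : n ≠ 0) (j : ℤ) (x : ℝ) :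
    Gam n j x = min 1 (1 / (n * |sin (π / (2 * n) * (x * n / π - 1 / 2 + j))|)) := by
  have hπ := pi_ne_zero
  unfold Gam xnode
  congr 5
  field_simp
  ring

theorem Gam_periodic (n : ℕ) (x : ℝ) : Periodic (fun j : ℤ => Gam n j x) ((2 * n : ℕ) : ℤ) := by
  intro j
  rcases eq_or_ne n 0 with rfl | hn
  · simp
  simp only [Gam_eq hn]
  rw [show π / (2 * n) * (x * n / π - 1 / 2 + ((j + ((2 * n : ℕ) : ℤ) : ℤ) : ℝ)) =
      π / (2 * n) * (x * n / π - 1 / 2 + j) + π by push_cast; field_simp; ring,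
    sin_add_pi, abs_neg]

theorem Gam_sq_le {n : ℕ} (hn : 0 < n) (x : ℝ) {k : ℕ} (hk : k < 2 * n) :
    Gam n (-⌊x * n / π - 1 / 2⌋ + k) x ^ 2 ≤
      clampedInvSq k + clampedInvSq (2 * n - 1 - k : ℕ) := by
  set T := x * n / π - 1 / 2
  set t := k + Int.fract T with ht_def
  have hnR : (0 : ℝ) < n := Nat.cast_pos.mpr hn
  have hkR : (k : ℝ) + 1 ≤ 2 * n := by exact_mod_cast hk
  have ht : T + ((-⌊T⌋ + k : ℤ) : ℝ) = t := by
    rw [ht_def, Int.fract]; push_cast; ring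
  have ht₀ : 0 ≤ t := by positivity
  have ht₂ : t ≤ 2 * n := by linarith [Int.fract_lt_one T]
  have hmin : min (k : ℝ) (2 * n - 1 - k : ℕ) ≤ min t (2 * n - t) := by
    rw [Nat.cast_sub (by omega), Nat.cast_sub (by omega)]
    push_cast
    exact min_le_min (by linarith [Int.fract_nonneg T]) (by linarith [Int.fract_lt_one T])
  rw [Gam_eq hn.ne', ht]
  calc min 1 (1 / (n * |sin (π / (2 * n) * t)|)) ^ 2
      ≤ clampedInvSq (min t (2 * n - t)) :=
        min_one_one_div_sq_le_clampedInvSq (by positivity)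
          ((min_sub_le_mul_sin hnR ht₀ ht₂).trans (by gcongr; exact le_abs_self _))
    _ ≤ clampedInvSq (min (k : ℝ) (2 * n - 1 - k : ℕ)) := clampedInvSq_antitone hmin
    _ ≤ clampedInvSq k + clampedInvSq (2 * n - 1 - k : ℕ) := clampedInvSq_min_le _ _

theorem stmt7_gamma_sum_bound (n : ℕ) (hn : 0 < n) (x : ℝ) :
    ∑ j ∈ Finset.Icc (1 - (n : ℤ)) (n : ℤ), Gam n j x ^ 2 < 6 := by
  have hper : Periodic (fun j : ℤ => Gam n j x ^ 2) ((2 * n : ℕ) : ℤ) := fun j =>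
    congrArg (· ^ 2) (Gam_periodic n x j)
  calc ∑ j ∈ Icc (1 - (n : ℤ)) n, Gam n j x ^ 2
      = ∑ k ∈ range (2 * n), Gam n (1 - n + k) x ^ 2 := by
        rw [Int.Icc_eq_finset_map, sum_map,
          show (n + 1 - (1 - n) : ℤ).toNat = 2 * n by omega]
        rfl
    _ = ∑ k ∈ range (2 * n), Gam n (-⌊x * n / π - 1 / 2⌋ + k) x ^ 2 := by
        rw [hper.sum_range_add, hper.sum_range_add]
    _ ≤ ∑ k ∈ range (2 * n), (clampedInvSq k + clampedInvSq (2 * n - 1 - k : ℕ)) :=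
        sum_le_sum fun k hk => Gam_sq_le hn x (mem_range.mp hk)
    _ = 2 * ∑ k ∈ range (2 * n), clampedInvSq k := by
        rw [sum_add_distrib, sum_range_reflect (fun k : ℕ => clampedInvSq k)]
        ring
    _ < 6 := by linarith [sum_range_clampedInvSq_lt_three (2 * n)]
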